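/- Let Δ > 0 and let ϱ : [0, ∞) → [0, ∞) be nonincreasing with convergent series μ := ϱ(0) + 2·Σ_{m=1}^∞ ϱ(mΔ). Let B₁, …, B_p ∈ ℝ^{N×q} be matrices such that each B_i has columns b_{i,1}, …, b_{i,q} satisfying |⟨b_{i,n}, b_{i,m}⟩| ≤ ϱ(|n − m|·Δ) for all n, m ∈ {1, …, q}. Then for every u ∈ ℝ^p with ‖u‖ ≤ 1, the block concatenation [u₁B₁ … u_pB_p] ∈ ℝ^{N×pq} satisfies ‖[u₁B₁ … u_pB_p]‖ ≤ √μ. -/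

import Mathlib

/-!
STATEMENT 16: Coherence bound for the spectral norm of a scaled block concatenation,
the `k ∈ {1,2,3}` case: `‖[u₁B₁ … u_pB_p]‖ ≤ √μ` for `‖u‖ ≤ 1`.

The columns of the `i`-th block are `b_{i,m} = B i · m`, with Euclidean inner products
`⟨b_{i,n}, b_{i,m}⟩ = Σⱼ B i j n · B i j m`.  Spectral norms come from the scoped instances
of `Matrix.L2OpNorm`, `u` carries the Euclidean norm, and `Σ_{m=1}^∞ ϱ(mΔ)` is indexed by
`m : ℕ` through `ϱ((m+1)·Δ)`.
-/

open scoped Matrix.Norms.L2Operator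

/-- The scaled horizontal concatenation `M(u) = [u₁B₁ u₂B₂ … u_pB_p]`. -/
def scaledHcat {N p q : ℕ} (u : EuclideanSpace ℝ (Fin p))
    (B : Fin p → Matrix (Fin N) (Fin q) ℝ) :
    Matrix (Fin N) (Fin p × Fin q) ℝ :=
  Matrix.of fun n ik => u ik.1 * B ik.1 n ik.2

/-!
Write `M = [u₁B₁ … u_pB_p]`, so `M y = Σᵢ uᵢ Bᵢ yᵢ` and, by the triangle and Cauchy–Schwarz
inequalities, `‖M‖ ≤ ‖u‖ · maxᵢ ‖Bᵢ‖`. Each block is handled by the Schur test applied to its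
Gram matrix `BᵢᵀBᵢ`, whose entries are dominated by the Toeplitz envelope `ϱ(|n - m|Δ)`: every
row of the envelope is a finite, injectively indexed part of the two-sided series
`Σ_{z ∈ ℤ} ϱ(|z|Δ) = ϱ(0) + 2 Σ_{m ≥ 1} ϱ(mΔ) = μ`, so `‖Bᵢ‖² ≤ μ`.
-/

open Finset Matrix

theorem HasSum.int_natAbs {M : Type*} [AddCommMonoid M] [TopologicalSpace M] [ContinuousAdd M]
    {φ : ℕ → M} {a : M} (h : HasSum (fun k => φ (k + 1)) a) :
    HasSum (fun z : ℤ => φ z.natAbs) (φ 0 + 2 • a) := by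
  convert HasSum.of_add_one_of_neg_add_one (f := fun z : ℤ => φ z.natAbs)
    (by convert h using 3; omega) (by convert h using 3; omega) using 1
  simp only [Int.natAbs_zero]
  abel

theorem sum_natAbs_le_of_injective {ι : Type*} [Fintype ι] {φ : ℕ → ℝ} (hφ : ∀ k, 0 ≤ φ k)
    (hs : Summable fun k => φ (k + 1)) {e : ι → ℤ} (he : Function.Injective e) :
    ∑ i, φ (e i).natAbs ≤ φ 0 + 2 * ∑' k, φ (k + 1) := by
  have h := hs.hasSum.int_natAbs
  rw [nsmul_eq_mul, Nat.cast_ofNat] at h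
  rw [← h.tsum_eq, ← tsum_fintype (L := SummationFilter.unconditional ι)]
  exact tsum_comp_le_tsum_of_inj h.summable (fun z => hφ z.natAbs) he

theorem sum_envelope_le {q : ℕ} {Δ : ℝ} (hΔ : 0 ≤ Δ) {ϱ : ℝ → ℝ}
    (hϱ0 : ∀ s ∈ Set.Ici (0 : ℝ), 0 ≤ ϱ s) (hsum : Summable fun m : ℕ => ϱ ((m + 1) * Δ))
    (n : Fin q) :
    ∑ m : Fin q, ϱ (|(n : ℝ) - (m : ℝ)| * Δ) ≤ ϱ 0 + 2 * ∑' m : ℕ, ϱ ((m + 1) * Δ) := by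
  have hnatAbs : ∀ m : Fin q, |(n : ℝ) - (m : ℝ)| = (((m : ℤ) - n).natAbs : ℝ) := fun m => by
    rw [Nat.cast_natAbs, abs_sub_comm]; norm_cast
  simp_rw [hnatAbs]
  have h := sum_natAbs_le_of_injective (φ := fun k => ϱ (k * Δ))
    (fun k => hϱ0 _ (Set.mem_Ici.mpr (by positivity))) (by simpa using hsum)
    (e := fun m : Fin q => (m : ℤ) - n) fun a b hab => Fin.val_injective (by simpa using hab)
  simpa using h

theorem Matrix.dotProduct_mulVec_le_of_schur {n : Type*} [Fintype n] {G r : Matrix n n ℝ} {μ : ℝ}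
    (hG : ∀ i j, |G i j| ≤ r i j) (hrow : ∀ i, ∑ j, r i j ≤ μ) (hcol : ∀ j, ∑ i, r i j ≤ μ)
    (v : n → ℝ) : v ⬝ᵥ (G *ᵥ v) ≤ μ * (v ⬝ᵥ v) := by
  have hterm : ∀ i j, v i * (G i j * v j) ≤ (v i ^ 2 * r i j + v j ^ 2 * r i j) / 2 := by
    intro i j
    have hr : 0 ≤ r i j := (abs_nonneg _).trans (hG i j)
    calc v i * (G i j * v j) ≤ |v i * (G i j * v j)| := le_abs_self _
      _ = |v i| * |v j| * |G i j| := by rw [abs_mul, abs_mul]; ring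
      _ ≤ |v i| * |v j| * r i j := by gcongr; exact hG i j
      _ ≤ _ := by nlinarith [mul_nonneg (sq_nonneg (|v i| - |v j|)) hr, sq_abs (v i), sq_abs (v j)]
  calc v ⬝ᵥ (G *ᵥ v) = ∑ i, ∑ j, v i * (G i j * v j) := by simp only [dotProduct, mulVec, mul_sum]
    _ ≤ ∑ i, ∑ j, (v i ^ 2 * r i j + v j ^ 2 * r i j) / 2 := by gcongr with i _ j _; exact hterm i j
    _ = (∑ i, v i ^ 2 * ∑ j, r i j + ∑ j, v j ^ 2 * ∑ i, r i j) / 2 := by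
        simp only [← sum_div, sum_add_distrib, mul_sum]
        rw [sum_comm (f := fun i j => v j ^ 2 * r i j)]
    _ ≤ (∑ i, v i ^ 2 * μ + ∑ j, v j ^ 2 * μ) / 2 := by
        gcongr with i _ j _
        · exact hrow i
        · exact hcol j
    _ = μ * (v ⬝ᵥ v) := by simp only [dotProduct, ← sum_mul, sq]; ring

theorem Matrix.l2_opNorm_le_of_mulVec {𝕜 m n : Type*} [RCLike 𝕜] [Fintype m] [Fintype n]
    [DecidableEq n] (A : Matrix m n 𝕜) {C : ℝ} (hC : 0 ≤ C)
    (h : ∀ x : EuclideanSpace 𝕜 n, ‖(EuclideanSpace.equiv m 𝕜).symm (A *ᵥ x)‖ ≤ C * ‖x‖) :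
    ‖A‖ ≤ C :=
  ContinuousLinearMap.opNorm_le_bound _ hC h

theorem EuclideanSpace.real_norm_sq_eq_dotProduct {m : Type*} [Fintype m]
    (x : EuclideanSpace ℝ m) : ‖x‖ ^ 2 = x.ofLp ⬝ᵥ x.ofLp := by
  rw [← real_inner_self_eq_norm_sq, EuclideanSpace.inner_eq_star_dotProduct, star_trivial]

theorem Matrix.l2_opNorm_le_sqrt_of_schur {m n : Type*} [Fintype m] [Fintype n] [DecidableEq n]
    (A : Matrix m n ℝ) {r : Matrix n n ℝ} {μ : ℝ} (hG : ∀ i j, |(Aᵀ * A) i j| ≤ r i j)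
    (hrow : ∀ i, ∑ j, r i j ≤ μ) (hcol : ∀ j, ∑ i, r i j ≤ μ) : ‖A‖ ≤ √μ := by
  refine A.l2_opNorm_le_of_mulVec (Real.sqrt_nonneg μ) fun x => ?_
  have hgram : (A *ᵥ x) ⬝ᵥ (A *ᵥ x) = x ⬝ᵥ ((Aᵀ * A) *ᵥ x) := by
    rw [dotProduct_mulVec, ← mulVec_transpose, mulVec_mulVec, dotProduct_comm]
  have hsq : ‖(EuclideanSpace.equiv m ℝ).symm (A *ᵥ x)‖ ^ 2 ≤ μ * ‖x‖ ^ 2 :=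
    calc _ = (A *ᵥ x) ⬝ᵥ (A *ᵥ x) := EuclideanSpace.real_norm_sq_eq_dotProduct _
      _ = x ⬝ᵥ ((Aᵀ * A) *ᵥ x) := hgram
      _ ≤ μ * (x ⬝ᵥ x) := dotProduct_mulVec_le_of_schur hG hrow hcol x
      _ = μ * ‖x‖ ^ 2 := by rw [EuclideanSpace.real_norm_sq_eq_dotProduct]
  calc _ ≤ √(μ * ‖x‖ ^ 2) := Real.le_sqrt_of_sq_le hsq
    _ = √μ * ‖x‖ := by rw [Real.sqrt_mul' _ (sq_nonneg _), Real.sqrt_sq (norm_nonneg _)]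

theorem norm_scaledHcat_le {N p q : ℕ} (u : EuclideanSpace ℝ (Fin p))
    (B : Fin p → Matrix (Fin N) (Fin q) ℝ) {C : ℝ} (hC : 0 ≤ C) (hB : ∀ i, ‖B i‖ ≤ C) :
    ‖scaledHcat u B‖ ≤ ‖u‖ * C := by
  refine (scaledHcat u B).l2_opNorm_le_of_mulVec (by positivity) fun y => ?_
  let y' : Fin p → EuclideanSpace ℝ (Fin q) := fun i => WithLp.toLp 2 fun k => y (i, k)
  have hdecomp : (EuclideanSpace.equiv _ ℝ).symm (scaledHcat u B *ᵥ y)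
      = ∑ i, u i • (EuclideanSpace.equiv _ ℝ).symm (B i *ᵥ y' i) := by
    ext j
    simp [y', scaledHcat, mulVec, dotProduct, Fintype.sum_prod_type, mul_sum, mul_assoc]
  have hu : ‖u‖ = √(∑ i, |u i| ^ 2) := by simp [EuclideanSpace.norm_eq]
  have hy : ‖y‖ = √(∑ i, ‖y' i‖ ^ 2) := by
    rw [← Real.sqrt_sq (norm_nonneg y), EuclideanSpace.real_norm_sq_eq, Fintype.sum_prod_type]
    simp only [y', EuclideanSpace.real_norm_sq_eq]
  calc _ = ‖∑ i, u i • (EuclideanSpace.equiv _ ℝ).symm (B i *ᵥ y' i)‖ := by rw [hdecomp]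
    _ ≤ ∑ i, |u i| * (C * ‖y' i‖) := by
        refine norm_sum_le_of_le _ fun i _ => ?_
        rw [norm_smul, Real.norm_eq_abs]
        gcongr
        exact ((B i).l2_opNorm_mulVec _).trans (by gcongr; exact hB i)
    _ = C * ∑ i, |u i| * ‖y' i‖ := by rw [mul_sum]; exact sum_congr rfl fun i _ => by ring
    _ ≤ C * (√(∑ i, |u i| ^ 2) * √(∑ i, ‖y' i‖ ^ 2)) := by
        gcongr; exact Real.sum_mul_le_sqrt_mul_sqrt _ _ _
    _ = ‖u‖ * C * ‖y‖ := by rw [hu, hy]; ring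

theorem coherence_bound_scaled_blocks_general
    {N p q : ℕ} (Δ : ℝ) (hΔ : 0 < Δ)
    (ϱ : ℝ → ℝ)
    (hϱ0 : ∀ s ∈ Set.Ici (0 : ℝ), 0 ≤ ϱ s)
    (hsum : Summable fun m : ℕ => ϱ ((m + 1) * Δ))
    (μ : ℝ) (hμ : μ = ϱ 0 + 2 * ∑' m : ℕ, ϱ ((m + 1) * Δ))
    (B : Fin p → Matrix (Fin N) (Fin q) ℝ)
    (hcorr : ∀ (i : Fin p) (n m : Fin q),
      |∑ j, B i j n * B i j m| ≤ ϱ (|(n : ℝ) - (m : ℝ)| * Δ)) :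
    ∀ u : EuclideanSpace ℝ (Fin p), ‖u‖ ≤ 1 →
      ‖scaledHcat u B‖ ≤ Real.sqrt μ := by
  intro u hu
  have hrow (n : Fin q) : ∑ m : Fin q, ϱ (|(n : ℝ) - (m : ℝ)| * Δ) ≤ μ :=
    hμ ▸ sum_envelope_le hΔ.le hϱ0 hsum n
  have hblock (i : Fin p) : ‖B i‖ ≤ √μ :=
    (B i).l2_opNorm_le_sqrt_of_schur (r := of fun n m => ϱ (|(n : ℝ) - (m : ℝ)| * Δ))
      (fun n m => by simpa [mul_apply] using hcorr i n m) hrow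
      (fun m => by simpa only [of_apply, abs_sub_comm] using hrow m)
  calc ‖scaledHcat u B‖ ≤ ‖u‖ * √μ := norm_scaledHcat_le u B (Real.sqrt_nonneg μ) hblock
    _ ≤ √μ := mul_le_of_le_one_left (Real.sqrt_nonneg μ) hu

theorem coherence_bound_scaled_blocks
    {N p q : ℕ} (Δ : ℝ) (hΔ : 0 < Δ)
    (ϱ : ℝ → ℝ)
    (hϱ0 : ∀ s ∈ Set.Ici (0 : ℝ), 0 ≤ ϱ s)
    (hϱanti : AntitoneOn ϱ (Set.Ici (0 : ℝ)))
    (hsum : Summable fun m : ℕ => ϱ ((m + 1) * Δ))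
    (μ : ℝ) (hμ : μ = ϱ 0 + 2 * ∑' m : ℕ, ϱ ((m + 1) * Δ))
    (B : Fin p → Matrix (Fin N) (Fin q) ℝ)
    (hcorr : ∀ (i : Fin p) (n m : Fin q),
      |∑ j, B i j n * B i j m| ≤ ϱ (|(n : ℝ) - (m : ℝ)| * Δ)) :
    ∀ u : EuclideanSpace ℝ (Fin p), ‖u‖ ≤ 1 →
      ‖scaledHcat u B‖ ≤ Real.sqrt μ :=
  coherence_bound_scaled_blocks_general Δ hΔ ϱ hϱ0 hsum μ hμ B hcorr
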